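/- arXiv:math/0311103 — 2 statements merged into one kernel-verified Lean document; each statement's English description precedes it below -/
import Mathlib

section
/- Goodstein's Theorem: for every natural number m there exists a natural number n ≥ 1 such that the n-th term G(n, m) of the Goodstein sequence of m equals 0. -/
/-! Substituting `ω` for the base (`O b`) turns hereditary base-`b` representations into Cantor
normal forms, so `O b` is strictly increasing for `b ≥ 2`, and it is invariant under the base
change: `O (b + 1) (B b m) = O b m`. Along a Goodstein sequence, each step therefore bumps the
base without changing the ordinal and then subtracts one, which strictly lowers it. A sequence
that never reached `0` would give an infinite descending chain of ordinals. -/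

/-- `hsub b u m` substitutes the value `u` for the base `b` throughout the
hereditary base-`b` representation of `m` (with `hsub b u 0 = 0`). -/
def hsub (b u : ℕ) (m : ℕ) : ℕ :=
  if m = 0 then 0
  else
    u ^ hsub b u (Nat.log b m) * (m / b ^ Nat.log b m) + hsub b u (m % b ^ Nat.log b m)
termination_by m
decreasing_by
  · exact Nat.log_lt_self b (by assumption)
  · have hpos : 0 < b ^ Nat.log b m := by
      rcases Nat.eq_zero_or_pos b with hb | hb
      · simp [hb]
      · exact pow_pos hb _
    exact lt_of_lt_of_le (Nat.mod_lt _ hpos) (Nat.pow_log_le_self b (by assumption))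

/-- Goodstein's base-change ("bumping") function: replace the base `b` by `b + 1`
throughout the hereditary base-`b` representation of `m` (with `B b 0 = 0`). -/
def B (b m : ℕ) : ℕ := hsub b (b + 1) m

/-- The Goodstein sequence of `m`: `G 1 m = m`, and `G (k+1) m = B (k+1) (G k m) - 1`
for `k ≥ 1` (truncated subtraction), so the `k`-th term is written in hereditary
base `k + 1`. -/
def G : ℕ → ℕ → ℕ
  | 0, m => m
  | 1, m => m
  | (k + 2), m => B (k + 2) (G (k + 1) m) - 1

/-- The auxiliary Goodstein-type sequence: `L 1 k = k ^ k` (written in hereditary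
base `k`), and `L (n+1) k = B (k+n-1) (L n k) - 1` for `n ≥ 1` (truncated
subtraction), so the `n`-th term is written in hereditary base `k + n - 1`. -/
def L : ℕ → ℕ → ℕ
  | 0, k => k ^ k
  | 1, k => k ^ k
  | (n + 2), k => B (k + n) (L (n + 1) k) - 1

/-- `O b m` is the ordinal obtained by substituting `ω` for the base `b`
throughout the hereditary base-`b` representation of `m` (with `O b 0 = 0`). -/
noncomputable def O (b : ℕ) (m : ℕ) : Ordinal :=
  if m = 0 then 0
  else
    Ordinal.omega0 ^ O b (Nat.log b m) * ((m / b ^ Nat.log b m : ℕ) : Ordinal)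
      + O b (m % b ^ Nat.log b m)
termination_by m
decreasing_by
  · exact Nat.log_lt_self b (by assumption)
  · have hpos : 0 < b ^ Nat.log b m := by
      rcases Nat.eq_zero_or_pos b with hb | hb
      · simp [hb]
      · exact pow_pos hb _
    exact lt_of_lt_of_le (Nat.mod_lt _ hpos) (Nat.pow_log_le_self b (by assumption))

open Ordinal

universe v

namespace Nat

variable {b n : ℕ}

lemma div_pow_log_pos (hn : n ≠ 0) : 0 < n / b ^ log b n := by
  rcases b.eq_zero_or_pos with rfl | hb
  · simpa using Nat.pos_of_ne_zero hn
  · exact Nat.div_pos (pow_log_le_self b hn) (Nat.pow_pos hb)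

lemma div_pow_log_lt (hb : 1 < b) : n / b ^ log b n < b := by
  rw [Nat.div_lt_iff_lt_mul (Nat.pow_pos (by omega)), ← pow_succ']
  exact lt_pow_succ_log_self hb n

lemma mod_pow_log_lt_self (hb : 1 < b) (hn : n ≠ 0) : n % b ^ log b n < n :=
  (Nat.mod_lt _ (Nat.pow_pos (by omega))).trans_le (pow_log_le_self b hn)

variable {d E R : ℕ}

lemma pow_le_pow_mul_add (hd : 0 < d) : b ^ E ≤ b ^ E * d + R :=
  (Nat.le_mul_of_pos_right _ hd).trans (Nat.le_add_right _ _)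

lemma log_pow_mul_add (hdb : d < b) (hd : 0 < d) (hR : R < b ^ E) :
    log b (b ^ E * d + R) = E := by
  refine log_eq_of_pow_le_of_lt_pow (pow_le_pow_mul_add hd) ?_
  calc b ^ E * d + R < b ^ E * (d + 1) := by rw [Nat.mul_succ]; omega
    _ ≤ b ^ (E + 1) := by rw [pow_succ]; exact Nat.mul_le_mul_left _ hdb

lemma pow_mul_add_div (hR : R < b ^ E) : (b ^ E * d + R) / b ^ E = d := by
  rw [Nat.mul_add_div (Nat.zero_lt_of_lt hR), Nat.div_eq_of_lt hR, add_zero]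

lemma pow_mul_add_mod (hR : R < b ^ E) : (b ^ E * d + R) % b ^ E = R := by
  rw [Nat.mul_add_mod, Nat.mod_eq_of_lt hR]

end Nat

lemma hsub_zero {b u : ℕ} : hsub b u 0 = 0 := by
  rw [hsub]; simp

lemma hsub_of_ne_zero {b u m : ℕ} (hm : m ≠ 0) :
    hsub b u m =
      u ^ hsub b u (Nat.log b m) * (m / b ^ Nat.log b m) + hsub b u (m % b ^ Nat.log b m) := by
  rw [hsub]; simp [hm]

section O

variable {b : ℕ}

lemma O_zero : O b 0 = 0 := by
  rw [O]; simp

lemma O_of_ne_zero {m : ℕ} (hm : m ≠ 0) :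
    O b m = ω ^ O b (Nat.log b m) * ((m / b ^ Nat.log b m : ℕ) : Ordinal)
      + O b (m % b ^ Nat.log b m) := by
  rw [O]; simp [hm]

lemma O_pow_mul_add {d E R : ℕ} (hdb : d < b) (hd : 0 < d) (hR : R < b ^ E) :
    O b (b ^ E * d + R) = ω ^ O b E * (d : Ordinal) + O b R := by
  rw [O_of_ne_zero ((Nat.zero_lt_of_lt hR).trans_le (Nat.pow_le_pow_mul_add hd)).ne',
    Nat.log_pow_mul_add hdb hd hR, Nat.pow_mul_add_div hR, Nat.pow_mul_add_mod hR]

lemma O_pow (hb : 1 < b) (E : ℕ) : O b (b ^ E) = ω ^ O b E := by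
  simpa [O_zero] using O_pow_mul_add (R := 0) hb one_pos (Nat.pow_pos (by omega) : 0 < b ^ E)

lemma omega0_opow_le_O {n : ℕ} (hn : n ≠ 0) : ω ^ O b (Nat.log b n) ≤ O b n := by
  rw [O_of_ne_zero hn]
  refine le_trans ?_ le_self_add
  exact le_mul_of_one_le_right' (by exact_mod_cast Nat.div_pow_log_pos hn)

lemma O_lt_omega0_opow (hb : 1 < b) {l : ℕ} (hmono : StrictMonoOn (O.{v} b) (Set.Iic l)) {x : ℕ}
    (hx : x < b ^ l) : O.{v} b x < ω ^ O b l := by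
  induction x using Nat.strong_induction_on generalizing l with
  | _ x ih =>
  rcases eq_or_ne x 0 with rfl | hx0
  · rw [O_zero]
    exact opow_pos _ omega0_pos
  have hlog : Nat.log b x < l := Nat.log_lt_of_lt_pow hx0 hx
  have hexp : O b (Nat.log b x) < O b l :=
    hmono (Set.mem_Iic.2 hlog.le) (Set.mem_Iic.2 le_rfl) hlog
  have hrem : O b (x % b ^ Nat.log b x) < ω ^ O b (Nat.log b x) :=
    ih _ (Nat.mod_pow_log_lt_self hb hx0) (hmono.mono (Set.Iic_subset_Iic.2 hlog.le))
      (Nat.mod_lt _ (Nat.pow_pos (by omega)))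
  rw [O_of_ne_zero hx0]
  exact isPrincipal_add_omega0_opow _ (opow_mul_lt_opow (natCast_lt_omega0 _) hexp)
    (hrem.trans ((opow_lt_opow_iff_right one_lt_omega0).2 hexp))

theorem O_strictMono (hb : 1 < b) : StrictMono (O b) := by
  suffices h : ∀ n, ∀ m < n, O b m < O b n from fun m n hmn => h n m hmn
  intro n
  induction n using Nat.strong_induction_on with
  | _ n ih =>
  intro m hmn
  have hn : n ≠ 0 := by omega
  set l := Nat.log b n
  have hmono : StrictMonoOn (O b) (Set.Iic l) := fun i _ j hj hij =>
    ih j (lt_of_le_of_lt hj (Nat.log_lt_self b hn)) i hij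
  rcases lt_or_ge m (b ^ l) with hm | hm
  · exact (O_lt_omega0_opow hb hmono hm).trans_le (omega0_opow_le_O hn)
  have hlog : Nat.log b m = l :=
    le_antisymm (Nat.log_mono_right hmn.le) (Nat.le_log_of_pow_le hb hm)
  have hpow : 0 < b ^ l := Nat.pow_pos (by omega)
  have hrem : O b (m % b ^ l) < ω ^ O b l :=
    O_lt_omega0_opow hb hmono (Nat.mod_lt _ hpow)
  rw [O_of_ne_zero hn, O_of_ne_zero (by omega : m ≠ 0), hlog]
  rcases (Nat.div_le_div_right (c := b ^ l) hmn.le).lt_or_eq with hdiv | hdiv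
  · calc ω ^ O b l * ((m / b ^ l : ℕ) : Ordinal) + O b (m % b ^ l)
        < ω ^ O b l * ((m / b ^ l : ℕ) : Ordinal) + ω ^ O b l := add_lt_add_right hrem _
      _ = ω ^ O b l * ((m / b ^ l + 1 : ℕ) : Ordinal) := by push_cast; rw [mul_add_one]
      _ ≤ ω ^ O b l * ((n / b ^ l : ℕ) : Ordinal) := mul_le_mul_right (by exact_mod_cast hdiv) _
      _ ≤ _ := le_self_add
  · have hmod : m % b ^ l < n % b ^ l := by
      have := Nat.div_add_mod m (b ^ l)
      have := Nat.div_add_mod n (b ^ l)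
      rw [hdiv] at *
      omega
    rw [hdiv]
    exact add_lt_add_right (ih _ (Nat.mod_pow_log_lt_self hb hn) _ hmod) _

end O

theorem O_hsub {b u : ℕ} (hb : 1 < b) (hbu : b ≤ u) (m : ℕ) :
    O.{v} u (hsub b u m) = O b m := by
  induction m using Nat.strong_induction_on with
  | _ m ih =>
  rcases eq_or_ne m 0 with rfl | hm
  · rw [hsub_zero, O_zero, O_zero]
  set l := Nat.log b m
  have hl : l < m := Nat.log_lt_self b hm
  have hr : m % b ^ l < m := Nat.mod_pow_log_lt_self hb hm
  have hu : 1 < u := hb.trans_le hbu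
  -- `O u` reflects `<`, so the bound on the remainder transfers from base `b`.
  have hR : hsub b u (m % b ^ l) < u ^ hsub b u l := by
    rw [← (O_strictMono.{v} hu).lt_iff_lt, O_pow hu, ih _ hr, ih _ hl]
    exact O_lt_omega0_opow hb ((O_strictMono hb).strictMonoOn _)
      (Nat.mod_lt _ (Nat.pow_pos (by omega)))
  rw [hsub_of_ne_zero hm, O_pow_mul_add ((Nat.div_pow_log_lt hb).trans_le hbu)
    (Nat.div_pow_log_pos hm) hR, ih _ hl, ih _ hr, O_of_ne_zero hm]

lemma O_G_succ_lt {m : ℕ} (k : ℕ) (hG : G (k + 2) m ≠ 0) :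
    O (k + 3) (G (k + 2) m) < O (k + 2) (G (k + 1) m) := by
  have hstep : G (k + 2) m = B (k + 2) (G (k + 1) m) - 1 := rfl
  calc O (k + 3) (G (k + 2) m) < O (k + 3) (B (k + 2) (G (k + 1) m)) :=
        O_strictMono (by omega) (by omega)
    _ = O (k + 2) (G (k + 1) m) := O_hsub (by omega) (Nat.le_succ _) _

/-- **Goodstein's Theorem**: for every natural number `m` there exists `n ≥ 1`
such that the `n`-th term of the Goodstein sequence of `m` equals `0`. -/
theorem goodstein_theorem (m : ℕ) : ∃ n : ℕ, 1 ≤ n ∧ G n m = 0 := by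
  by_contra! h
  exact not_strictAnti_of_wellFoundedLT (fun k => O.{0} (k + 2) (G (k + 1) m))
    (strictAnti_nat_of_succ_lt fun k => O_G_succ_lt k (h (k + 2) (by omega)))
end

section
/- Lemma 2: for all natural numbers m and k ≥ 1, if the hereditary base-(k+1) representation of G(k, m) contains more than one nonzero term (i.e., at least two distinct exponents occur with nonzero coefficient), then G(k+1, m) ≥ G(k, m). -/
/-!
Bumping the base never decreases a number, and strictly increases every `m` at least the base:
its leading term `b ^ e` with `e ≥ 1` becomes `(b + 1) ^ e'` with `e' ≥ e`. If two distinct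
exponents occur in `G k m`, one of them is positive, so `G k m ≥ k + 1`; the bump then gains at
least one, which pays for the subtraction of one.
-/

theorem le_hsub {b u : ℕ} (hbu : b ≤ u) (hu : 0 < u) (m : ℕ) : m ≤ hsub b u m := by
  induction m using Nat.strong_induction_on with
  | _ m ih =>
    rcases Nat.eq_zero_or_pos m with rfl | hm
    · simp [hsub]
    rw [hsub, if_neg hm.ne']
    set e := Nat.log b m
    have hbe : b ^ e ≤ m := Nat.pow_log_le_self b hm.ne'
    have hbe_pos : 0 < b ^ e := by
      rcases Nat.eq_zero_or_pos b with rfl | hb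
      · simp [e]
      · positivity
    have hexp : e ≤ hsub b u e := ih e (Nat.log_lt_self b hm.ne')
    have hrem : m % b ^ e ≤ hsub b u (m % b ^ e) :=
      ih _ ((Nat.mod_lt _ hbe_pos).trans_le hbe)
    have hlead : b ^ e ≤ u ^ hsub b u e :=
      (Nat.pow_le_pow_left hbu e).trans (Nat.pow_le_pow_right hu hexp)
    calc m = b ^ e * (m / b ^ e) + m % b ^ e := (Nat.div_add_mod m (b ^ e)).symm
      _ ≤ u ^ hsub b u e * (m / b ^ e) + hsub b u (m % b ^ e) := by gcongr

theorem lt_hsub {b u m : ℕ} (hb : 2 ≤ b) (hbu : b < u) (hbm : b ≤ m) : m < hsub b u m := by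
  have hm : m ≠ 0 := by omega
  rw [hsub, if_neg hm]
  set e := Nat.log b m
  have he : e ≠ 0 := (Nat.log_pos (by omega) hbm).ne'
  have hbe : b ^ e ≤ m := Nat.pow_log_le_self b hm
  have hlead : b ^ e < u ^ hsub b u e :=
    (Nat.pow_lt_pow_left hbu he).trans_le
      (Nat.pow_le_pow_right (by omega) (le_hsub hbu.le (by omega) e))
  have hdigit : 0 < m / b ^ e := Nat.div_pos hbe (by positivity)
  calc m = b ^ e * (m / b ^ e) + m % b ^ e := (Nat.div_add_mod m (b ^ e)).symm
    _ < u ^ hsub b u e * (m / b ^ e) + hsub b u (m % b ^ e) :=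
      Nat.add_lt_add_of_lt_of_le (Nat.mul_lt_mul_of_pos_right hlead hdigit)
        (le_hsub hbu.le (by omega) _)

theorem pow_le_of_digit_ne_zero {b n e : ℕ} (h : n / b ^ e % b ≠ 0) : b ^ e ≤ n := by
  by_contra! hlt
  simp [Nat.div_eq_of_lt hlt] at h

theorem goodstein_lemma2_general (m k : ℕ)
    (h : ∃ i j : ℕ, i ≠ j ∧ (G k m / (k + 1) ^ i) % (k + 1) ≠ 0 ∧
      (G k m / (k + 1) ^ j) % (k + 1) ≠ 0) :
    G k m ≤ G (k + 1) m := by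
  rcases k with _ | k
  · exact le_rfl
  obtain ⟨i, j, hij, hi, hj⟩ := h
  have hbase : k + 2 ≤ G (k + 1) m := by
    obtain ⟨e, he, hdigit⟩ : ∃ e, e ≠ 0 ∧ G (k + 1) m / (k + 2) ^ e % (k + 2) ≠ 0 := by
      rcases Nat.eq_zero_or_pos i with rfl | hi0
      · exact ⟨j, hij.symm, hj⟩
      · exact ⟨i, hi0.ne', hi⟩
    exact (Nat.le_self_pow he _).trans (pow_le_of_digit_ne_zero hdigit)
  have hbump : G (k + 1) m < B (k + 2) (G (k + 1) m) := lt_hsub (by omega) (by omega) hbase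
  show G (k + 1) m ≤ B (k + 2) (G (k + 1) m) - 1
  omega

/-- **Lemma 2**: for `k ≥ 1`, if the hereditary base-`(k+1)` representation of
`G k m` contains more than one nonzero term (at least two distinct exponents
occur with nonzero coefficient), then `G (k+1) m ≥ G k m`. -/
theorem goodstein_lemma2 (m k : ℕ) (hk : 1 ≤ k)
    (h : ∃ i j : ℕ, i ≠ j ∧ (G k m / (k + 1) ^ i) % (k + 1) ≠ 0 ∧
      (G k m / (k + 1) ^ j) % (k + 1) ≠ 0) :
    G k m ≤ G (k + 1) m :=
  goodstein_lemma2_general m k h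
end
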